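/- arXiv:1907.01202 — 3 statements merged into one kernel-verified Lean document; each statement's English description precedes it below -/
import Mathlib

section
/- Fix p, ε, α ∈ (0,1) and β ∈ (α,1), and let b := (1−p)^{−1}. Then there exists d₀ such that for every integer d ≥ d₀, setting s := ⌈d^β⌉ and ℓ := √(α·log_b d), there exists a graph G with exactly d vertices and more than (1/2 − ε)·p·d² edges, such that for every family S of s pairwise disjoint ℓ-sets in G, more than (1/2)·d^{−α}·C(s,2) unordered pairs of ℓ-sets in S are non-adjacent. -/
/-!
Keep each pair of vertices independently with probability `p` (the weights `bernoulliWeight p`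
on `Sym2 V → Bool`). If `N` counts events "all coordinates in `B j` equal `b`" with pairwise
disjoint blocks `B j`, expanding `∏ j, (1 - c 𝟙_j)` over subsets of `J` gives
`E[(1 - c) ^ N] = ∏ j, (1 - c q_j)`, hence a Chernoff lower-tail bound for `N`.

For the edge count this shows that `G` has at most `(1/2 - ε) p d²` edges with probability
`< 1/2`. For a fixed disjoint family of `s` ℓ-sets, a pair `{A, B}` is non-adjacent with
probability `(1 - p) ^ (|A| |B|) ≥ (1 - p) ^ ℓ² = d ^ (-α)`, and different pairs involve
disjoint sets of vertex pairs, so at most half of the expected `d ^ (-α) C(s, 2)` pairs are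
non-adjacent with probability `≤ exp (-d ^ (2β - α) / 32)`. There are only
`d ^ (2ℓs) = exp (O(d ^ β log² d))` such families and `β < 2β - α`, so a union bound over all
of them and the edge event leaves a good graph.
-/

open Finset

namespace RandomGraph

open Real Filter Asymptotics

theorem prod_ite_one_sub_eq_sum_powerset {κ : Type*} [DecidableEq κ] (J : Finset κ)
    (E : κ → Prop) [DecidablePred E] (c : ℝ) :
    ∏ j ∈ J, (if E j then 1 - c else 1) =
      ∑ T ∈ J.powerset, (-c) ^ #T * if ∀ j ∈ T, E j then 1 else 0 := by
  calc ∏ j ∈ J, (if E j then 1 - c else 1)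
      = ∏ j ∈ J, ((if E j then -c else 0) + 1) :=
        prod_congr rfl fun j _ => by split_ifs <;> ring
    _ = ∑ T ∈ J.powerset, (-c) ^ #T * if ∀ j ∈ T, E j then 1 else 0 := by
        rw [prod_add]
        refine sum_congr rfl fun T _ => ?_
        rw [prod_ite_zero, prod_const, prod_const_one, mul_one]
        split_ifs <;> simp

section Bernoulli

variable {ι : Type*} [Fintype ι] {p : ℝ}

def bernoulliMass (p : ℝ) (b : Bool) : ℝ := if b then p else 1 - p

def bernoulliWeight (p : ℝ) (ω : ι → Bool) : ℝ := ∏ e, bernoulliMass p (ω e)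

lemma bernoulliMass_nonneg (hp0 : 0 ≤ p) (hp1 : p ≤ 1) (b : Bool) : 0 ≤ bernoulliMass p b := by
  cases b <;> simp [bernoulliMass] <;> linarith

lemma bernoulliMass_le_one (hp0 : 0 ≤ p) (hp1 : p ≤ 1) (b : Bool) : bernoulliMass p b ≤ 1 := by
  cases b <;> simp [bernoulliMass] <;> linarith

lemma bernoulliWeight_nonneg (hp0 : 0 ≤ p) (hp1 : p ≤ 1) (ω : ι → Bool) :
    0 ≤ bernoulliWeight p ω :=
  prod_nonneg fun _ _ => bernoulliMass_nonneg hp0 hp1 _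

variable [DecidableEq ι]

theorem sum_bernoulliWeight_cylinder (p : ℝ) (B : Finset ι) (b : Bool) :
    ∑ ω with ∀ e ∈ B, ω e = b, bernoulliWeight p ω = bernoulliMass p b ^ #B := by
  have hfactor (e : ι) :
      ∑ v, (if e ∈ B → v = b then bernoulliMass p v else 0) =
        if e ∈ B then bernoulliMass p b else 1 := by
    by_cases he : e ∈ B <;> cases b <;> simp [he, bernoulliMass]
  calc ∑ ω with ∀ e ∈ B, ω e = b, bernoulliWeight p ω
      = ∑ ω : ι → Bool, ∏ e, (if e ∈ B → ω e = b then bernoulliMass p (ω e) else 0) := by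
        rw [sum_filter]
        refine sum_congr rfl fun ω _ => ?_
        rw [Finset.prod_ite_zero]
        simp [bernoulliWeight]
    _ = ∏ e, if e ∈ B then bernoulliMass p b else 1 := by
        rw [← prod_congr rfl fun e _ => hfactor e]
        exact (Fintype.prod_sum fun e v => if e ∈ B → v = b then bernoulliMass p v else 0).symm
    _ = bernoulliMass p b ^ #B := by simp

theorem sum_bernoulliWeight (p : ℝ) : ∑ ω : ι → Bool, bernoulliWeight p ω = 1 := by
  simpa using sum_bernoulliWeight_cylinder (ι := ι) p ∅ true

theorem sum_bernoulliWeight_mul_prod_ite {κ : Type*} {J : Finset κ} {B : κ → Finset ι}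
    (hB : (J : Set κ).PairwiseDisjoint B) (b : Bool) (c : ℝ) :
    ∑ ω, bernoulliWeight p ω * ∏ j ∈ J, (if ∀ e ∈ B j, ω e = b then 1 - c else 1) =
      ∏ j ∈ J, (1 - c * bernoulliMass p b ^ #(B j)) := by
  classical
  have hcylinder (T : Finset κ) (hT : T ∈ J.powerset) :
      ∑ ω, bernoulliWeight p ω * (if ∀ j ∈ T, ∀ e ∈ B j, ω e = b then 1 else 0) =
        ∏ j ∈ T, bernoulliMass p b ^ #(B j) := by
    simp only [mul_ite, mul_one, mul_zero]
    rw [← sum_filter, prod_pow_eq_pow_sum, ← card_biUnion (hB.subset (by simpa using hT)),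
      ← sum_bernoulliWeight_cylinder]
    refine sum_congr (filter_congr fun ω _ => ?_) fun _ _ => rfl
    simp only [mem_biUnion, forall_exists_index, and_imp]
    exact ⟨fun h e j hj he => h j hj e he, fun h j hj e he => h e j hj he⟩
  calc ∑ ω, bernoulliWeight p ω * ∏ j ∈ J, (if ∀ e ∈ B j, ω e = b then 1 - c else 1)
      = ∑ T ∈ J.powerset, (-c) ^ #T *
          ∑ ω, bernoulliWeight p ω * (if ∀ j ∈ T, ∀ e ∈ B j, ω e = b then 1 else 0) := by
        simp only [prod_ite_one_sub_eq_sum_powerset, mul_sum,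
          sum_comm (s := (univ : Finset (ι → Bool)))]
        exact sum_congr rfl fun T _ => sum_congr rfl fun ω _ => by ring
    _ = ∑ T ∈ J.powerset, (∏ j ∈ T, -c * bernoulliMass p b ^ #(B j)) * ∏ j ∈ J \ T, 1 := by
        refine sum_congr rfl fun T hT => ?_
        rw [hcylinder T hT, prod_mul_distrib, prod_const, prod_const_one, mul_one]
    _ = ∏ j ∈ J, (1 - c * bernoulliMass p b ^ #(B j)) := by
        rw [← prod_add]
        exact prod_congr rfl fun j _ => by ring

theorem sum_bernoulliWeight_card_filter_le_le (hp0 : 0 ≤ p) (hp1 : p ≤ 1) {κ : Type*}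
    {J : Finset κ} {B : κ → Finset ι} (hB : (J : Set κ).PairwiseDisjoint B) (b : Bool)
    {c : ℝ} (hc0 : 0 ≤ c) (hc1 : c < 1) (a : ℝ) :
    ∑ ω with (#{j ∈ J | ∀ e ∈ B j, ω e = b} : ℝ) ≤ a, bernoulliWeight p ω ≤
      exp (-log (1 - c) * a - c * ∑ j ∈ J, bernoulliMass p b ^ #(B j)) := by
  set N : (ι → Bool) → ℝ := fun ω => #{j ∈ J | ∀ e ∈ B j, ω e = b}
  have hlog : log (1 - c) ≤ 0 := log_nonpos (by linarith) (by linarith)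
  have hprod (ω : ι → Bool) :
      ∏ j ∈ J, (if ∀ e ∈ B j, ω e = b then 1 - c else 1) = exp (log (1 - c) * N ω) := by
    rw [prod_ite, prod_const, prod_const_one, mul_one, mul_comm, exp_nat_mul,
      exp_log (by linarith)]
  have hmarkov (ω : ι → Bool) (hω : N ω ≤ a) :
      bernoulliWeight p ω ≤ exp (-log (1 - c) * a) *
        (bernoulliWeight p ω * ∏ j ∈ J, (if ∀ e ∈ B j, ω e = b then 1 - c else 1)) := by
    rw [hprod, mul_left_comm, ← exp_add]
    refine le_mul_of_one_le_right (bernoulliWeight_nonneg hp0 hp1 ω) (one_le_exp ?_)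
    nlinarith
  have hfactor (j : κ) : 1 - c * bernoulliMass p b ^ #(B j) ≤
      exp (-(c * bernoulliMass p b ^ #(B j))) := by
    linarith [add_one_le_exp (-(c * bernoulliMass p b ^ #(B j)))]
  have hfactor_nonneg (j : κ) : 0 ≤ 1 - c * bernoulliMass p b ^ #(B j) := by
    have := pow_le_one₀ (bernoulliMass_nonneg hp0 hp1 b) (bernoulliMass_le_one hp0 hp1 b)
      (n := #(B j))
    nlinarith
  calc ∑ ω with N ω ≤ a, bernoulliWeight p ω
      ≤ ∑ ω with N ω ≤ a, exp (-log (1 - c) * a) *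
          (bernoulliWeight p ω * ∏ j ∈ J, (if ∀ e ∈ B j, ω e = b then 1 - c else 1)) :=
        sum_le_sum fun ω hω => hmarkov ω (mem_filter.1 hω).2
    _ ≤ ∑ ω, exp (-log (1 - c) * a) *
          (bernoulliWeight p ω * ∏ j ∈ J, (if ∀ e ∈ B j, ω e = b then 1 - c else 1)) :=
        sum_le_sum_of_subset_of_nonneg (filter_subset _ _) fun ω _ _ => by
          rw [hprod]; have := bernoulliWeight_nonneg hp0 hp1 ω; positivity
    _ = exp (-log (1 - c) * a) * ∏ j ∈ J, (1 - c * bernoulliMass p b ^ #(B j)) := by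
        rw [← mul_sum, sum_bernoulliWeight_mul_prod_ite hB]
    _ ≤ exp (-log (1 - c) * a) * exp (∑ j ∈ J, -(c * bernoulliMass p b ^ #(B j))) := by
        rw [exp_sum]
        exact mul_le_mul_of_nonneg_left
          (prod_le_prod (fun j _ => hfactor_nonneg j) fun j _ => hfactor j) (exp_pos _).le
    _ = exp (-log (1 - c) * a - c * ∑ j ∈ J, bernoulliMass p b ^ #(B j)) := by
        rw [← exp_add, sum_neg_distrib, mul_sum]; ring_nf

end Bernoulli

theorem exists_forall_notMem_of_sum_lt_one {Ω κ : Type*} [Fintype Ω] {w : Ω → ℝ}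
    (hw0 : ∀ ω, 0 ≤ w ω) (hw1 : ∑ ω, w ω = 1) (K : Finset κ) (E : κ → Finset Ω)
    (h : ∑ k ∈ K, ∑ ω ∈ E k, w ω < 1) : ∃ ω, ∀ k ∈ K, ω ∉ E k := by
  classical
  by_contra! hcover
  refine (h.trans_le ?_).false
  calc 1 = ∑ ω, w ω := hw1.symm
    _ ≤ ∑ ω, ∑ k ∈ K, if ω ∈ E k then w ω else 0 := sum_le_sum fun ω _ => by
        obtain ⟨k, hk, hkω⟩ := hcover ω
        calc w ω = if ω ∈ E k then w ω else 0 := (if_pos hkω).symm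
          _ ≤ ∑ k ∈ K, if ω ∈ E k then w ω else 0 :=
            single_le_sum (f := fun k => if ω ∈ E k then w ω else 0)
              (fun k _ => by split_ifs <;> simp [hw0 ω]) hk
    _ = ∑ k ∈ K, ∑ ω ∈ E k, w ω := by
        rw [sum_comm]
        exact sum_congr rfl fun k _ => (sum_ite_mem _ _ _).trans (by rw [univ_inter])

section Graph

variable {V : Type*} [DecidableEq V]

def crossEdges (P : Finset (Finset V)) : Finset (Sym2 V) :=
  P.offDiag.biUnion fun AB => (AB.1 ×ˢ AB.2).image Sym2.mk.uncurry

lemma mem_crossEdges {P : Finset (Finset V)} {e : Sym2 V} :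
    e ∈ crossEdges P ↔ ∃ A ∈ P, ∃ B ∈ P, A ≠ B ∧ ∃ a ∈ A, ∃ b ∈ B, s(a, b) = e := by
  simp only [crossEdges, mem_biUnion, mem_offDiag, mem_image, mem_product, Prod.exists,
    Function.uncurry_apply_pair]
  constructor
  · rintro ⟨A, B, ⟨hA, hB, hAB⟩, a, b, ⟨ha, hb⟩, he⟩
    exact ⟨A, hA, B, hB, hAB, a, ha, b, hb, he⟩
  · rintro ⟨A, hA, B, hB, hAB, a, ha, b, hb, he⟩
    exact ⟨A, B, ⟨hA, hB, hAB⟩, a, b, ⟨ha, hb⟩, he⟩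

lemma crossEdges_pair {A B : Finset V} (hAB : A ≠ B) :
    crossEdges {A, B} = (A ×ˢ B).image Sym2.mk.uncurry := by
  ext e
  simp only [mem_crossEdges, mem_insert, mem_singleton, mem_image, mem_product, Prod.exists]
  constructor
  · rintro ⟨X, rfl | rfl, Y, rfl | rfl, hXY, a, ha, b, hb, rfl⟩
    · exact absurd rfl hXY
    · exact ⟨a, b, ⟨ha, hb⟩, rfl⟩
    · exact ⟨b, a, ⟨hb, ha⟩, Sym2.eq_swap⟩
    · exact absurd rfl hXY
  · rintro ⟨a, b, ⟨ha, hb⟩, rfl⟩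
    exact ⟨A, .inl rfl, B, .inr rfl, hAB, a, ha, b, hb, rfl⟩

lemma card_crossEdges_pair_le (A B : Finset V) : #(crossEdges {A, B}) ≤ #A * #B := by
  by_cases hAB : A = B
  · simp [hAB, crossEdges]
  · rw [crossEdges_pair hAB, ← card_product]
    exact card_image_le

lemma pairwiseDisjoint_crossEdges {S : Finset (Finset V)}
    (hS : (S : Set (Finset V)).PairwiseDisjoint id) :
    (S.powersetCard 2 : Set (Finset (Finset V))).PairwiseDisjoint crossEdges := by
  intro P hP Q hQ hPQ
  obtain ⟨hPS, A, B, hAB, rfl⟩ : P ⊆ S ∧ ∃ A B, A ≠ B ∧ P = {A, B} := by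
    simpa [card_eq_two] using hP
  obtain ⟨hQS, A', B', hAB', rfl⟩ : Q ⊆ S ∧ ∃ A B, A ≠ B ∧ Q = {A, B} := by
    simpa [card_eq_two] using hQ
  have hS' {X Y : Finset V} (hX : X ∈ S) (hY : Y ∈ S) {v : V} (hvX : v ∈ X) (hvY : v ∈ Y) :
      X = Y := hS.elim_finset hX hY v hvX hvY
  rw [Function.onFun, disjoint_left]
  intro e he he'
  rw [crossEdges_pair hAB, mem_image] at he
  rw [crossEdges_pair hAB', mem_image] at he'
  obtain ⟨⟨a, b⟩, hab, rfl⟩ := he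
  obtain ⟨⟨a', b'⟩, hab', he⟩ := he'
  rw [mem_product] at hab hab'
  have hA := hPS (mem_insert_self A {B})
  have hB := hPS (mem_insert_of_mem (mem_singleton_self B))
  have hA' := hQS (mem_insert_self A' {B'})
  have hB' := hQS (mem_insert_of_mem (mem_singleton_self B'))
  apply hPQ
  rcases Sym2.eq_iff.1 he with ⟨rfl, rfl⟩ | ⟨rfl, rfl⟩
  · rw [hS' hA hA' hab.1 hab'.1, hS' hB hB' hab.2 hab'.2]
  · rw [hS' hA hB' hab.1 hab'.2, hS' hB hA' hab.2 hab'.1, pair_comm]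

lemma forall_not_adj_fromEdgeSet_iff {s : Set (Sym2 V)} {P : Finset (Finset V)}
    (hP : (P : Set (Finset V)).PairwiseDisjoint id) :
    (∀ A ∈ P, ∀ B ∈ P, A ≠ B → ∀ a ∈ A, ∀ b ∈ B, ¬ (SimpleGraph.fromEdgeSet s).Adj a b) ↔
      ∀ e ∈ crossEdges P, e ∉ s := by
  simp only [mem_crossEdges, SimpleGraph.fromEdgeSet_adj, not_and, not_not]
  constructor
  · rintro h _ ⟨A, hA, B, hB, hAB, a, ha, b, hb, rfl⟩ hs
    exact disjoint_left.1 (hP hA hB hAB) ha (h A hA B hB hAB a ha b hb hs ▸ hb)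
  · intro h A hA B hB hAB a ha b hb hs
    exact absurd hs (h _ ⟨A, hA, B, hB, hAB, a, ha, b, hb, rfl⟩)

lemma ncard_edgeSet_fromEdgeSet [Fintype V] (s : Set (Sym2 V)) [DecidablePred (· ∈ s)] :
    (SimpleGraph.fromEdgeSet s).edgeSet.ncard = #{e ∈ (⊤ : SimpleGraph V).edgeFinset | e ∈ s} := by
  rw [← Set.ncard_coe_finset]
  congr 1
  ext e
  simp [SimpleGraph.edgeSet_fromEdgeSet, and_comm]

end Graph

lemma card_filter_card_le_le {V : Type*} [Fintype V] (hV : 2 ≤ Fintype.card V) (L : ℕ) :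
    #{A : Finset V | #A ≤ L} ≤ Fintype.card V ^ (2 * L) := by
  classical
  set n := Fintype.card V
  have hsub : ({A : Finset V | #A ≤ L} : Finset _) ⊆
      (range (L + 1)).biUnion fun k => powersetCard k univ := by
    intro A hA
    simp only [mem_filter, mem_univ, true_and] at hA
    simpa [Nat.lt_succ_iff] using hA
  calc #{A : Finset V | #A ≤ L}
      ≤ ∑ k ∈ range (L + 1), #(powersetCard k (univ : Finset V)) :=
        (card_le_card hsub).trans card_biUnion_le
    _ ≤ ∑ _k ∈ range (L + 1), n ^ L := sum_le_sum fun k hk => by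
        rw [card_powersetCard, card_univ]
        exact (Nat.choose_le_pow n k).trans
          (Nat.pow_le_pow_right (by omega) (Nat.lt_succ_iff.1 (mem_range.1 hk)))
    _ = (L + 1) * n ^ L := by rw [sum_const, card_range, smul_eq_mul]
    _ ≤ 2 ^ L * n ^ L := Nat.mul_le_mul_right _ Nat.lt_two_pow_self
    _ ≤ n ^ L * n ^ L := Nat.mul_le_mul_right _ (Nat.pow_le_pow_left hV L)
    _ = n ^ (2 * L) := by ring

open scoped Classical in
noncomputable def disjointFamilies (V : Type*) [Fintype V] [DecidableEq V] (L s : ℕ) :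
    Finset (Finset (Finset V)) :=
  {T ∈ powersetCard s {A : Finset V | #A ≤ L} | (T : Set (Finset V)).PairwiseDisjoint id}

lemma mem_disjointFamilies {V : Type*} [Fintype V] [DecidableEq V] {L s : ℕ}
    {T : Finset (Finset V)} :
    T ∈ disjointFamilies V L s ↔
      (∀ A ∈ T, #A ≤ L) ∧ #T = s ∧ (T : Set (Finset V)).PairwiseDisjoint id := by
  simp only [disjointFamilies, mem_filter, mem_powersetCard, subset_iff, mem_univ, true_and,
    and_assoc]

lemma card_disjointFamilies_le {V : Type*} [Fintype V] [DecidableEq V]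
    (hV : 2 ≤ Fintype.card V) (L s : ℕ) :
    #(disjointFamilies V L s) ≤ Fintype.card V ^ (2 * L * s) := by
  classical
  calc #(disjointFamilies V L s) ≤ #(powersetCard s ({A | #A ≤ L} : Finset (Finset V))) :=
        card_filter_le _ _
    _ ≤ #({A | #A ≤ L} : Finset (Finset V)) ^ s := by
        rw [card_powersetCard]; exact Nat.choose_le_pow _ _
    _ ≤ (Fintype.card V ^ (2 * L)) ^ s := Nat.pow_le_pow_left (card_filter_card_le_le hV L) s
    _ = Fintype.card V ^ (2 * L * s) := (pow_mul _ _ _).symm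

section Sampling

variable {V : Type*} [Fintype V] [DecidableEq V] {p : ℝ}

def graphOf (ω : Sym2 V → Bool) : SimpleGraph V := SimpleGraph.fromEdgeSet {e | ω e}

theorem sum_bernoulliWeight_few_edges_le (hp0 : 0 ≤ p) (hp1 : p ≤ 1) {ε : ℝ} (hε0 : 0 ≤ ε)
    (hε1 : ε < 1) (a : ℝ) :
    ∑ ω : Sym2 V → Bool with ((graphOf ω).edgeSet.ncard : ℝ) ≤ a, bernoulliWeight p ω ≤
      exp (-log (1 - ε) * a - ε * (p * (Fintype.card V).choose 2)) := by
  have hcount (ω : Sym2 V → Bool) : (graphOf ω).edgeSet.ncard =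
      #{e ∈ (⊤ : SimpleGraph V).edgeFinset | ∀ e' ∈ ({e} : Finset _), ω e' = true} := by
    rw [graphOf, ncard_edgeSet_fromEdgeSet]
    simp
  simp_rw [hcount]
  convert sum_bernoulliWeight_card_filter_le_le hp0 hp1 (J := (⊤ : SimpleGraph V).edgeFinset)
    (B := fun e => {e}) (fun _ _ _ _ h => disjoint_singleton.2 h) true hε0 hε1 a using 4
  simp only [bernoulliMass, card_singleton, pow_one, if_true, sum_const,
    SimpleGraph.card_edgeFinset_top_eq_card_choose_two, nsmul_eq_mul, mul_comm]

theorem sum_bernoulliWeight_few_nonadjacent_pairs_le (hp0 : 0 ≤ p) (hp1 : p ≤ 1)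
    {S : Finset (Finset V)} (hS : (S : Set (Finset V)).PairwiseDisjoint id) {μ : ℝ}
    (hμ0 : 0 ≤ μ) (hμ : ∀ A ∈ S, ∀ B ∈ S, μ ≤ (1 - p) ^ (#A * #B)) :
    ∑ ω : Sym2 V → Bool with (#{P ∈ S.powersetCard 2 | ∀ e ∈ crossEdges P, ω e = false} : ℝ) ≤
        1 / 2 * μ * (#S).choose 2, bernoulliWeight p ω ≤
      exp (-(μ * (#S).choose 2 / 8)) := by
  have hpair (P : Finset (Finset V)) (hP : P ∈ S.powersetCard 2) :
      μ ≤ bernoulliMass p false ^ #(crossEdges P) := by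
    obtain ⟨hPS, A, B, -, rfl⟩ : P ⊆ S ∧ ∃ A B, A ≠ B ∧ P = {A, B} := by
      simpa [card_eq_two] using hP
    refine (hμ A (hPS (by simp)) B (hPS (by simp))).trans ?_
    exact pow_le_pow_of_le_one (by linarith) (by linarith) (card_crossEdges_pair_le A B)
  have hsum : μ * (#S).choose 2 ≤
      ∑ P ∈ S.powersetCard 2, bernoulliMass p false ^ #(crossEdges P) := by
    simpa [card_powersetCard, mul_comm] using card_nsmul_le_sum _ _ μ hpair
  refine (sum_bernoulliWeight_card_filter_le_le hp0 hp1 (pairwiseDisjoint_crossEdges hS) false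
    (c := 1 / 2) (by norm_num) (by norm_num) _).trans (exp_le_exp.2 ?_)
  -- with `c = 1 / 2` the exponent is at most `(log 2 - 1) μ C(#S, 2) / 2`, and `log 2 < 3 / 4`
  have hlog : log (1 - 1 / 2) = -log 2 := by rw [← log_inv]; norm_num
  have hlog2 := log_two_lt_d9
  have : 0 ≤ μ * (#S).choose 2 := by positivity
  rw [hlog]
  nlinarith

theorem sum_disjointFamilies_sum_bernoulliWeight_le (hp0 : 0 ≤ p) (hp1 : p ≤ 1)
    (hV : 2 ≤ Fintype.card V) {L s : ℕ} {μ : ℝ} (hμ0 : 0 ≤ μ) (hμ : μ ≤ (1 - p) ^ (L ^ 2)) :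
    ∑ T ∈ disjointFamilies V L s, ∑ ω : Sym2 V → Bool with
        (#{P ∈ T.powersetCard 2 | ∀ e ∈ crossEdges P, ω e = false} : ℝ) ≤
          1 / 2 * μ * s.choose 2, bernoulliWeight p ω ≤
      exp (2 * L * s * log (Fintype.card V) - μ * s.choose 2 / 8) := by
  have hn : (0 : ℝ) < Fintype.card V := by norm_cast; omega
  calc _ ≤ ∑ _T ∈ disjointFamilies V L s, exp (-(μ * s.choose 2 / 8)) :=
        sum_le_sum fun T hT => by
          obtain ⟨hTsmall, rfl, hTdisj⟩ := mem_disjointFamilies.1 hT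
          refine sum_bernoulliWeight_few_nonadjacent_pairs_le hp0 hp1 hTdisj hμ0
            fun A hA B hB => hμ.trans (pow_le_pow_of_le_one (by linarith) (by linarith) ?_)
          exact sq L ▸ Nat.mul_le_mul (hTsmall A hA) (hTsmall B hB)
    _ ≤ (Fintype.card V : ℝ) ^ (2 * L * s) * exp (-(μ * s.choose 2 / 8)) := by
        rw [sum_const, nsmul_eq_mul]
        gcongr
        exact_mod_cast card_disjointFamilies_le hV L s
    _ = exp (2 * L * s * log (Fintype.card V) - μ * s.choose 2 / 8) := by
        rw [← exp_log hn, ← exp_nat_mul, ← exp_add, exp_log hn]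
        push_cast
        ring_nf

open scoped Classical in
theorem exists_graph_of_exponents_le {ε ℓ μ a : ℝ} {s : ℕ} (hp0 : 0 ≤ p) (hp1 : p ≤ 1)
    (hε0 : 0 ≤ ε) (hε1 : ε < 1) (hV : 2 ≤ Fintype.card V) (hμ0 : 0 ≤ μ)
    (hμ : μ ≤ (1 - p) ^ (⌊ℓ⌋₊ ^ 2))
    (hedges : -log (1 - ε) * a - ε * (p * (Fintype.card V).choose 2) ≤ -1)
    (hfamilies : 2 * ⌊ℓ⌋₊ * s * log (Fintype.card V) - μ * s.choose 2 / 8 ≤ -1) :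
    ∃ G : SimpleGraph V, a < G.edgeSet.ncard ∧
      ∀ S : Finset (Finset V), #S = s → (∀ A ∈ S, (#A : ℝ) ≤ ℓ) →
        (S : Set (Finset V)).Pairwise Disjoint →
        1 / 2 * μ * (s.choose 2 : ℝ) < #{P ∈ S.powersetCard 2 |
          ∀ A ∈ P, ∀ B ∈ P, A ≠ B → ∀ a ∈ A, ∀ b ∈ B, ¬ G.Adj a b} := by
  set L := ⌊ℓ⌋₊
  set bad : Option (Finset (Finset V)) → Finset (Sym2 V → Bool) := fun k =>
    k.elim ({ω | ((graphOf ω).edgeSet.ncard : ℝ) ≤ a} : Finset _) fun T =>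
      ({ω | (#{P ∈ T.powersetCard 2 | ∀ e ∈ crossEdges P, ω e = false} : ℝ) ≤
        1 / 2 * μ * s.choose 2} : Finset (Sym2 V → Bool))
  have hfew_edges : ∑ ω ∈ bad none, bernoulliWeight p ω ≤ exp (-1) :=
    (sum_bernoulliWeight_few_edges_le hp0 hp1 hε0 hε1 a).trans (exp_le_exp.2 hedges)
  have hfew_pairs :
      ∑ T ∈ disjointFamilies V L s, ∑ ω ∈ bad (some T), bernoulliWeight p ω ≤ exp (-1) :=
    (sum_disjointFamilies_sum_bernoulliWeight_le hp0 hp1 hV hμ0 hμ).trans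
      (exp_le_exp.2 hfamilies)
  have hexp : 2 * exp (-1) < 1 := by
    rw [exp_neg, ← div_eq_mul_inv, div_lt_one (exp_pos 1)]
    linarith [add_one_lt_exp (one_ne_zero (α := ℝ))]
  obtain ⟨ω, hω⟩ := exists_forall_notMem_of_sum_lt_one (bernoulliWeight_nonneg hp0 hp1)
    (sum_bernoulliWeight p) (insertNone (disjointFamilies V L s)) bad
    (by rw [sum_insertNone]; linarith)
  refine ⟨graphOf ω, lt_of_not_ge (by simpa [bad] using hω none none_mem_insertNone),
    fun S hS hsmall hdisj => ?_⟩
  have hSfamily : S ∈ disjointFamilies V L s :=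
    mem_disjointFamilies.2 ⟨fun A hA => Nat.le_floor (hsmall A hA), hS, hdisj⟩
  have hgood := hω (some S) (some_mem_insertNone.2 hSfamily)
  simp only [bad, Option.elim, mem_filter, mem_univ, true_and, not_le] at hgood
  refine hgood.trans_eq ?_
  congr 2
  refine filter_congr fun P hP => ?_
  have hPdisj : (P : Set (Finset V)).PairwiseDisjoint id :=
    hdisj.mono (coe_subset.2 (mem_powersetCard.1 hP).1)
  rw [graphOf, forall_not_adj_fromEdgeSet_iff hPdisj]
  simp

end Sampling

theorem eventually_const_mul_add_le {f g : ℝ → ℝ} (hfg : f =o[atTop] g)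
    (hg : Tendsto g atTop atTop) (C K : ℝ) {c : ℝ} (hc : 0 < c) :
    ∀ᶠ x in atTop, C * f x + K ≤ c * g x := by
  have hK : (fun _ => K) =o[atTop] g :=
    isLittleO_const_left.2 (.inr (tendsto_norm_atTop_atTop.comp hg))
  filter_upwards [((hfg.const_mul_left C).add hK).def hc, hg.eventually_ge_atTop 0]
    with x hx hgx
  rw [Real.norm_of_nonneg hgx] at hx
  exact (le_abs_self _).trans hx

theorem isLittleO_rpow_mul_log_sq {β γ : ℝ} (hβγ : β < γ) :
    (fun x => x ^ β * log x ^ 2) =o[atTop] fun x => x ^ γ := by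
  have hlog : (fun x => log x ^ 2) =o[atTop] fun x => x ^ (γ - β) := by
    exact (isLittleO_log_rpow_rpow_atTop 2 (sub_pos.2 hβγ)).congr_left fun x => rpow_two (log x)
  refine ((isBigO_refl (fun x : ℝ => x ^ β) atTop).mul_isLittleO hlog).congr' .rfl ?_
  filter_upwards [eventually_gt_atTop 0] with x hx
  rw [← rpow_add hx, add_sub_cancel]

lemma natFloor_sqrt_sq_le {y : ℝ} (hy : 0 ≤ y) : (⌊√y⌋₊ : ℝ) ^ 2 ≤ y :=
  calc (⌊√y⌋₊ : ℝ) ^ 2 ≤ √y ^ 2 := by gcongr; exact Nat.floor_le (sqrt_nonneg y)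
    _ = y := sq_sqrt hy

lemma natFloor_sqrt_le {y : ℝ} (hy : 0 ≤ y) : (⌊√y⌋₊ : ℝ) ≤ y :=
  le_trans (by exact_mod_cast Nat.le_self_pow two_ne_zero _) (natFloor_sqrt_sq_le hy)

lemma natCeil_le_two_mul {x : ℝ} (hx : 1 ≤ x) : (⌈x⌉₊ : ℝ) ≤ 2 * x := by
  linarith [Nat.ceil_lt_add_one (zero_le_one.trans hx)]

lemma sq_div_four_le_choose_two_natCeil {x : ℝ} (hx : 1 < x) :
    x ^ 2 / 4 ≤ (⌈x⌉₊.choose 2 : ℝ) := by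
  have hceil : x ≤ ⌈x⌉₊ := Nat.le_ceil x
  have htwo : (2 : ℝ) ≤ ⌈x⌉₊ := by
    exact_mod_cast Nat.lt_ceil.2 (by exact_mod_cast hx)
  rw [Nat.cast_choose_two]
  nlinarith

lemma neg_log_one_sub_mul_le {ε : ℝ} (hε0 : 0 < ε) (hε1 : ε < 1) :
    -log (1 - ε) * (1 / 2 - ε) ≤ ε * (1 - ε) / 2 := by
  have hlog : -log (1 - ε) * (1 - ε) ≤ ε := by
    have h := one_sub_inv_le_log_of_pos (sub_pos.2 hε1)
    have hinv : (1 - ε)⁻¹ * (1 - ε) = 1 := inv_mul_cancel₀ (by linarith)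
    nlinarith
  have hnonneg : 0 ≤ -log (1 - ε) := neg_nonneg.2 (log_nonpos (by linarith) (by linarith))
  rcases le_or_gt ε (1 / 2) with hε | hε
  · refine le_of_mul_le_mul_right ?_ (sub_pos.2 hε1)
    nlinarith [mul_le_mul_of_nonneg_right hlog (sub_nonneg.2 hε), pow_pos hε0 3]
  · nlinarith

lemma rpow_neg_le_one_sub_pow {p α x : ℝ} (hp0 : 0 < p) (hp1 : p < 1) (hα : 0 ≤ α) (hx : 1 ≤ x) :
    x ^ (-α) ≤ (1 - p) ^ (⌊√(α * (log x / log (1 - p)⁻¹))⌋₊ ^ 2) := by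
  have hq : 0 < 1 - p := sub_pos.2 hp1
  have hlogq : log (1 - p) < 0 := log_neg hq (by linarith)
  set y := α * (log x / log (1 - p)⁻¹)
  have hb : 0 < log (1 - p)⁻¹ := by rw [log_inv]; linarith
  have hy : 0 ≤ y := mul_nonneg hα (div_nonneg (log_nonneg hx) hb.le)
  calc x ^ (-α) = (1 - p) ^ y := by
        rw [rpow_def_of_pos (by linarith), rpow_def_of_pos hq]
        congr 1
        simp only [y, log_inv]
        field_simp
        rw [mul_div_cancel_right₀ _ hlogq.ne]
    _ ≤ (1 - p) ^ (⌊√y⌋₊ ^ 2) := by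
        rw [← rpow_natCast]
        exact rpow_le_rpow_of_exponent_ge hq (by linarith)
          (by exact_mod_cast natFloor_sqrt_sq_le hy)

theorem eventually_edge_exponent_le {p ε : ℝ} (hp : 0 < p) (hε0 : 0 < ε) (hε1 : ε < 1) :
    ∀ᶠ d : ℕ in atTop,
      -log (1 - ε) * ((1 / 2 - ε) * p * (d : ℝ) ^ 2) - ε * (p * (d.choose 2 : ℝ)) ≤ -1 := by
  have hreal := eventually_const_mul_add_le (isLittleO_pow_pow_atTop_of_lt one_lt_two)
    (tendsto_pow_atTop two_ne_zero) (ε * p / 2) 1 (c := ε ^ 2 * p / 2) (by positivity)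
  filter_upwards [tendsto_natCast_atTop_atTop.eventually hreal] with d hd
  have hkey := mul_le_mul_of_nonneg_right (neg_log_one_sub_mul_le hε0 hε1)
    (by positivity : (0 : ℝ) ≤ p * d ^ 2)
  rw [Nat.cast_choose_two]
  simp only [pow_one] at hd
  nlinarith

theorem eventually_family_exponent_le {p α β : ℝ} (hp0 : 0 < p) (hp1 : p < 1) (hα : 0 < α)
    (hαβ : α < β) :
    ∀ᶠ d : ℕ in atTop,
      2 * ⌊√(α * (log d / log (1 - p)⁻¹))⌋₊ * ⌈(d : ℝ) ^ β⌉₊ * log d -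
        (d : ℝ) ^ (-α) * (⌈(d : ℝ) ^ β⌉₊.choose 2 : ℝ) / 8 ≤ -1 := by
  have hb : 0 < log (1 - p)⁻¹ := by rw [log_inv]; linarith [log_neg (sub_pos.2 hp1) (by linarith)]
  have hreal := eventually_const_mul_add_le
    (isLittleO_rpow_mul_log_sq (by linarith : β < 2 * β - α))
    (tendsto_rpow_atTop (by linarith)) (4 * α / log (1 - p)⁻¹) 1 (c := 1 / 32) (by norm_num)
  filter_upwards [eventually_ge_atTop 2, tendsto_natCast_atTop_atTop.eventually hreal]
    with d hd2 hd
  have hx : (2 : ℝ) ≤ d := by exact_mod_cast hd2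
  have hlog : 0 ≤ log d := log_nonneg (by linarith)
  have hxβ : 1 < (d : ℝ) ^ β := one_lt_rpow (by linarith) (by linarith)
  have hL := natFloor_sqrt_le (y := α * (log d / log (1 - p)⁻¹)) (by positivity)
  have hs := natCeil_le_two_mul hxβ.le
  have hC := mul_le_mul_of_nonneg_left (sq_div_four_le_choose_two_natCeil hxβ)
    (rpow_nonneg (by linarith : (0 : ℝ) ≤ d) (-α))
  have hsplit : (d : ℝ) ^ (-α) * ((d : ℝ) ^ β) ^ 2 = (d : ℝ) ^ (2 * β - α) := by
    rw [← rpow_natCast, ← rpow_mul (by linarith), ← rpow_add (by linarith)]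
    ring_nf
  have hfloor : 2 * (⌊√(α * (log d / log (1 - p)⁻¹))⌋₊ : ℝ) * ⌈(d : ℝ) ^ β⌉₊ * log d ≤
      4 * α / log (1 - p)⁻¹ * ((d : ℝ) ^ β * log d ^ 2) := by
    calc 2 * (⌊√(α * (log d / log (1 - p)⁻¹))⌋₊ : ℝ) * ⌈(d : ℝ) ^ β⌉₊ * log d
        ≤ 2 * (α * (log d / log (1 - p)⁻¹)) * (2 * (d : ℝ) ^ β) * log d := by gcongr
      _ = 4 * α / log (1 - p)⁻¹ * ((d : ℝ) ^ β * log d ^ 2) := by ring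
  nlinarith

end RandomGraph

open scoped Classical in
/-- Random-graph lemma: fix `p, ε, α ∈ (0,1)` and `β ∈ (α,1)`, and let `b := (1-p)⁻¹`. For all
sufficiently large `d`, setting `s := ⌈d^β⌉` and `ℓ := √(α log_b d)`, there is a graph `G` on
`d` vertices with more than `(1/2 - ε) p d²` edges such that every family `S` of `s` pairwise
disjoint `ℓ`-sets has more than `(1/2) d^{-α} C(s,2)` non-adjacent pairs. -/
theorem random_graph_lemma (p ε α β : ℝ)
    (hp : p ∈ Set.Ioo (0:ℝ) 1) (hε : ε ∈ Set.Ioo (0:ℝ) 1)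
    (hα : α ∈ Set.Ioo (0:ℝ) 1) (hβ : β ∈ Set.Ioo α 1) :
    ∃ d₀ : ℕ, ∀ d : ℕ, d₀ ≤ d →
      ∃ G : SimpleGraph (Fin d),
        (1 / 2 - ε) * p * (d : ℝ) ^ 2 < (G.edgeSet.ncard : ℝ) ∧
        ∀ S : Finset (Finset (Fin d)),
          S.card = ⌈(d : ℝ) ^ β⌉₊ →
          (∀ A ∈ S, A.Nonempty ∧
            (A.card : ℝ) ≤ Real.sqrt (α * (Real.log d / Real.log (1 - p)⁻¹))) →
          (S : Set (Finset (Fin d))).Pairwise Disjoint →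
          (1 / 2) * (d : ℝ) ^ (-α) * ((⌈(d : ℝ) ^ β⌉₊).choose 2 : ℝ) <
            (((S.powersetCard 2).filter fun P =>
              ∀ A ∈ P, ∀ B ∈ P, A ≠ B → ∀ a ∈ A, ∀ b ∈ B, ¬ G.Adj a b).card : ℝ) := by
  obtain ⟨d₀, hd₀⟩ := Filter.eventually_atTop.1 <| (Filter.eventually_ge_atTop 2).and <|
    (RandomGraph.eventually_edge_exponent_le hp.1 hε.1 hε.2).and
      (RandomGraph.eventually_family_exponent_le hp.1 hp.2 hα.1 hβ.1)
  refine ⟨d₀, fun d hd => ?_⟩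
  obtain ⟨hd2, hedges, hfamilies⟩ := hd₀ d hd
  obtain ⟨G, hG, hpairs⟩ := RandomGraph.exists_graph_of_exponents_le (V := Fin d)
    (a := (1 / 2 - ε) * p * (d : ℝ) ^ 2) (ℓ := Real.sqrt (α * (Real.log d / Real.log (1 - p)⁻¹)))
    (μ := (d : ℝ) ^ (-α)) (s := ⌈(d : ℝ) ^ β⌉₊) hp.1.le hp.2.le hε.1.le hε.2 (by simpa using hd2)
    (Real.rpow_nonneg d.cast_nonneg _)
    (RandomGraph.rpow_neg_le_one_sub_pow hp.1 hp.2 hα.1.le (by exact_mod_cast (by omega : 1 ≤ d)))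
    (by simpa using hedges) (by simpa using hfamilies)
  refine ⟨G, hG, fun S hS hA hdisj => ?_⟩
  convert hpairs S hS (fun A hA' => (hA A hA').2) hdisj using 4
end

section
/- For all positive integers d and t and every integer n ≥ d, the number of t-tuples (X₁, X₂, …, X_t) such that each X_i is a nonempty subset of {1,2,…,d} and Σ_{i=1}^t |X_i| ≤ n is at most (4d)^n. -/
/-!
Rankin's trick: for `0 < ρ ≤ 1`, every tuple with `∑ |Xᵢ| ≤ n` has weight `ρ ^ ∑ |Xᵢ| ≥ ρ ^ n`, so
the count is at most `ρ⁻ⁿ` times the total weight of all tuples of nonempty sets. That weight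
factors over the coordinates as `((1 + ρ) ^ d - 1) ^ t`, and for `ρ = 1 / (4d)` the base is at most
`e ^ (1/4) - 1 ≤ 1`, leaving the bound `ρ⁻ⁿ = (4d) ^ n`.
-/

open Finset

section WeightedCount

variable {α ι : Type*} [Fintype α] [Fintype ι] [DecidableEq ι]

theorem sum_nonempty_pow_card {R : Type*} [CommRing R] (x : R) :
    ∑ Y : Finset α with Y.Nonempty, x ^ #Y = (1 + x) ^ Fintype.card α - 1 := by
  classical
  have hall : ∑ Y : Finset α, x ^ #Y = (1 + x) ^ Fintype.card α := by
    simpa [add_comm] using Fintype.sum_pow_mul_eq_add_pow α x (1 : R)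
  rw [← hall, ← sum_filter_add_sum_filter_not univ Finset.Nonempty]
  simp [Finset.not_nonempty_iff_eq_empty, Finset.filter_eq']

theorem sum_pow_sum_card_of_forall_nonempty {R : Type*} [CommRing R] (x : R) :
    ∑ X : ι → Finset α with ∀ i, (X i).Nonempty, x ^ ∑ i, #(X i) =
      ((1 + x) ^ Fintype.card α - 1) ^ Fintype.card ι := by
  rw [← sum_nonempty_pow_card, ← card_univ, ← prod_const, sum_filter, sum_filter,
    Fintype.prod_sum]
  refine sum_congr rfl fun X _ => ?_
  rw [Fintype.prod_ite_zero, prod_pow_eq_pow_sum]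

end WeightedCount

theorem card_filter_le_sum_pow_div_pow {β K : Type*} [Field K] [LinearOrder K]
    [IsStrictOrderedRing K] (s : Finset β) (g : β → ℕ) (n : ℕ) {ρ : K} (hρ₀ : 0 < ρ)
    (hρ₁ : ρ ≤ 1) : (#{x ∈ s | g x ≤ n} : K) ≤ (∑ x ∈ s, ρ ^ g x) / ρ ^ n := by
  rw [le_div_iff₀ (pow_pos hρ₀ n), ← nsmul_eq_mul, ← sum_const]
  calc ∑ x ∈ s with g x ≤ n, ρ ^ n ≤ ∑ x ∈ s with g x ≤ n, ρ ^ g x :=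
        sum_le_sum fun x hx => pow_le_pow_of_le_one hρ₀.le hρ₁ (mem_filter.1 hx).2
    _ ≤ ∑ x ∈ s, ρ ^ g x :=
        sum_le_sum_of_subset_of_nonneg (filter_subset _ _) fun _ _ _ => by positivity

open Real in
theorem one_add_inv_four_mul_pow_le_two (d : ℕ) : (1 + (4 * d : ℝ)⁻¹) ^ d ≤ 2 := by
  have hexp : exp (1 / 4) ≤ 2 := by
    have := exp_bound_div_one_sub_of_interval (x := 1 / 4) (by norm_num) (by norm_num)
    linarith
  calc (1 + (4 * d : ℝ)⁻¹) ^ d ≤ exp (4 * d : ℝ)⁻¹ ^ d := by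
        gcongr
        linarith [add_one_le_exp (4 * d : ℝ)⁻¹]
    _ = exp (d * (4 * d : ℝ)⁻¹) := (exp_nat_mul _ _).symm
    _ ≤ exp (1 / 4) := by
        gcongr
        rw [mul_inv, mul_left_comm, one_div]
        exact mul_le_of_le_one_right (by norm_num) mul_inv_le_one
    _ ≤ 2 := hexp

open scoped Classical in
theorem tuple_counting_general (d t n : ℕ) (hd : 0 < d) :
    (Finset.univ.filter fun X : Fin t → Finset (Fin d) =>
        (∀ i, (X i).Nonempty) ∧ ∑ i, (X i).card ≤ n).card ≤ (4 * d) ^ n := by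
  set ρ : ℝ := (4 * d)⁻¹
  have hρ₀ : 0 < ρ := by positivity
  have hρ₁ : ρ ≤ 1 := inv_le_one_of_one_le₀ (by norm_cast; omega)
  have hweight : ∑ X : Fin t → Finset (Fin d) with ∀ i, (X i).Nonempty, ρ ^ ∑ i, #(X i) =
      ((1 + ρ) ^ d - 1) ^ t := by
    convert sum_pow_sum_card_of_forall_nonempty (ι := Fin t) (α := Fin d) ρ <;> simp
  have hrankin := card_filter_le_sum_pow_div_pow
    {X : Fin t → Finset (Fin d) | ∀ i, (X i).Nonempty} (fun X => ∑ i, #(X i)) n hρ₀ hρ₁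
  rw [hweight, filter_filter] at hrankin
  have hbase : (1 + ρ) ^ d - 1 ≤ 1 := by linarith [one_add_inv_four_mul_pow_le_two d]
  have hbase₀ : 0 ≤ (1 + ρ) ^ d - 1 := sub_nonneg.2 (one_le_pow₀ (by linarith))
  rw [← Nat.cast_le (α := ℝ)]
  calc _ ≤ _ := hrankin
    _ ≤ 1 / ρ ^ n := by gcongr; exact pow_le_one₀ hbase₀ hbase
    _ = _ := by push_cast; rw [one_div, ← inv_pow, inv_inv]

open scoped Classical in
/-- Counting claim: for positive integers `d, t` and `n ≥ d`, the number of `t`-tuples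
`(X₁, …, X_t)` of nonempty subsets of `{1,…,d}` with `∑ |Xᵢ| ≤ n` is at most `(4d)^n`. -/
theorem tuple_counting (d t n : ℕ) (hd : 0 < d) (ht : 0 < t) (hn : d ≤ n) :
    (Finset.univ.filter fun X : Fin t → Finset (Fin d) =>
        (∀ i, (X i).Nonempty) ∧ ∑ i, (X i).card ≤ n).card ≤ (4 * d) ^ n :=
  tuple_counting_general d t n hd
end

section
/- Let G₀ be a graph on a vertex set V₀ with |V₀| = d, let r ≥ 1 be an integer, and let G be the graph with vertex set V₀ × {1,…,r} in which (x,i) and (y,j) are adjacent if and only if xy is an edge of G₀ (the blowup of G₀ by independent sets of size r). If a graph H with vertex set {1,2,…,t} is a minor of G, then there exist nonempty subsets B₁, B₂, …, B_t of V₀ such that Σ_{i=1}^t |B_i| ≤ d·r, each vertex of V₀ belongs to at most r of the sets B_i, and for every edge ij of H, either B_i ∩ B_j ≠ ∅ or some edge of G₀ joins B_i to B_j. -/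
/-!
Take `B i` to be the projection to `V₀` of the `i`-th branch set. Projection does not increase
sizes and the branch sets are disjoint in a graph on `d * r` vertices, which bounds `∑ |B i|`;
the branch sets whose projection contains `v` meet the `r`-element fibre `{v} × Fin r` in
disjoint pieces, which bounds the multiplicity; and an edge of `G` between two branch sets
projects to an edge of `G₀` between their projections.
-/

open Finset

/-- `H` is a minor of `G`: there is a family of pairwise disjoint nonempty subsets of `V(G)`,
each inducing a connected subgraph of `G`, with an edge of `G` between the branch sets of the
endpoints of every edge of `H`. -/
def IsMinor {V W : Type*} (H : SimpleGraph W) (G : SimpleGraph V) : Prop :=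
  ∃ B : W → Set V,
    (∀ w, (B w).Nonempty) ∧
    (Pairwise fun u v => Disjoint (B u) (B v)) ∧
    (∀ w, (G.induce (B w)).Connected) ∧
    (∀ u v, H.Adj u v → ∃ a ∈ B u, ∃ b ∈ B v, G.Adj a b)

/-- The average degree `2|E(G)|/|V(G)|` of a finite graph. -/
noncomputable def avgDeg {V : Type*} [Fintype V] (G : SimpleGraph V) : ℝ :=
  2 * G.edgeSet.ncard / Fintype.card V

/-- The constant `λ = max_{x>0} (1 - e^{-x})/√x = 0.63817…`. -/
noncomputable def lambdaMT : ℝ :=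
  sSup {y : ℝ | ∃ x : ℝ, 0 < x ∧ y = (1 - Real.exp (-x)) / Real.sqrt x}

open Function

namespace Finset

variable {ι α β γ : Type*} [Fintype ι]

theorem sum_card_le_card_of_pairwise_disjoint [Fintype γ] {S : ι → Finset γ}
    (hS : Pairwise (Disjoint on S)) : ∑ i, #(S i) ≤ Fintype.card γ := by
  classical
  rw [← card_biUnion (hS.set_pairwise _)]
  exact card_le_univ _

theorem card_filter_mem_image_fst_le [DecidableEq α] [Fintype β] {S : ι → Finset (α × β)}
    (hS : Pairwise (Disjoint on S)) (a : α) :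
    #{i | a ∈ (S i).image Prod.fst} ≤ Fintype.card β := by
  classical
  set s : Finset ι := {i | a ∈ (S i).image Prod.fst}
  have hfibre : ∀ i ∈ s, (S i ∩ {a} ×ˢ univ).Nonempty := by
    intro i hi
    obtain ⟨p, hp, rfl⟩ := mem_image.1 (mem_filter.1 hi).2
    exact ⟨p, mem_inter.2 ⟨hp, by simp⟩⟩
  calc #s ≤ #(s.biUnion fun i => S i ∩ {a} ×ˢ univ) :=
        card_le_card_biUnion (fun i _ j _ hij => (hS hij).mono inter_subset_left inter_subset_left)
          hfibre
    _ ≤ #({a} ×ˢ (univ : Finset β)) :=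
        card_le_card (biUnion_subset.2 fun _ _ => inter_subset_right)
    _ = Fintype.card β := by simp

end Finset

open scoped Classical in
theorem blowup_minor_projection_general {V₀ : Type} [Fintype V₀] (d r t : ℕ)
    (hd : Fintype.card V₀ = d)
    (G₀ : SimpleGraph V₀) (G : SimpleGraph (V₀ × Fin r))
    (hG : ∀ x y : V₀, ∀ i j : Fin r, G.Adj (x, i) (y, j) ↔ G₀.Adj x y)
    (H : SimpleGraph (Fin t)) (hH : IsMinor H G) :
    ∃ B : Fin t → Finset V₀,
      (∀ i, (B i).Nonempty) ∧
      ∑ i, (B i).card ≤ d * r ∧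
      (∀ v : V₀, (Finset.univ.filter fun i => v ∈ B i).card ≤ r) ∧
      (∀ i j, H.Adj i j →
        ¬ Disjoint (B i) (B j) ∨ ∃ a ∈ B i, ∃ b ∈ B j, G₀.Adj a b) := by
  obtain ⟨X, hne, hdisj, -, hedge⟩ := hH
  set S : Fin t → Finset (V₀ × Fin r) := fun i => (X i).toFinite.toFinset
  have hS : Pairwise (Disjoint on S) := fun i j hij => Set.Finite.disjoint_toFinset.2 (hdisj hij)
  have hmem : ∀ {i p}, p ∈ X i → p.1 ∈ (S i).image Prod.fst := fun hp =>
    mem_image_of_mem _ ((Set.Finite.mem_toFinset _).2 hp)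
  refine ⟨fun i => (S i).image Prod.fst, fun i => ?_, ?_, fun v => ?_, fun i j hij => Or.inr ?_⟩
  · obtain ⟨p, hp⟩ := hne i
    exact ⟨p.1, hmem hp⟩
  · calc ∑ i, #((S i).image Prod.fst) ≤ ∑ i, #(S i) := sum_le_sum fun i _ => card_image_le
      _ ≤ Fintype.card (V₀ × Fin r) := sum_card_le_card_of_pairwise_disjoint hS
      _ = d * r := by simp [hd]
  · simpa using card_filter_mem_image_fst_le hS v
  · obtain ⟨a, ha, b, hb, hab⟩ := hedge i j hij
    exact ⟨a.1, hmem ha, b.1, hmem hb, (hG a.1 b.1 a.2 b.2).1 hab⟩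

open scoped Classical in
/-- Projection of a minor model in a blowup: if `H` is a minor of the blowup `G` of `G₀` by
independent sets of size `r`, then projecting the branch sets to `V(G₀)` yields an
`H`-compatible blobbing. -/
theorem blowup_minor_projection {V₀ : Type} [Fintype V₀] (d r t : ℕ)
    (hd : Fintype.card V₀ = d) (hr : 1 ≤ r)
    (G₀ : SimpleGraph V₀) (G : SimpleGraph (V₀ × Fin r))
    (hG : ∀ x y : V₀, ∀ i j : Fin r, G.Adj (x, i) (y, j) ↔ G₀.Adj x y)
    (H : SimpleGraph (Fin t)) (hH : IsMinor H G) :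
    ∃ B : Fin t → Finset V₀,
      (∀ i, (B i).Nonempty) ∧
      ∑ i, (B i).card ≤ d * r ∧
      (∀ v : V₀, (Finset.univ.filter fun i => v ∈ B i).card ≤ r) ∧
      (∀ i j, H.Adj i j →
        ¬ Disjoint (B i) (B j) ∨ ∃ a ∈ B i, ∃ b ∈ B j, G₀.Adj a b) :=
  blowup_minor_projection_general d r t hd G₀ G hG H hH
end
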